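/- arXiv:2211.08474 — 2 statements merged into one kernel-verified Lean document; each statement's English description precedes it below -/
import Mathlib

section
/- Let C ∈ ℝ^{m×n}, D ∈ ℝ^{n×m}, and V₂ ∈ ℝ^{n×s} be matrices such that V₂ᵀ·V₂ = I_s (orthonormal columns) and Iₙ − D·C = V₂·V₂ᵀ. Let M > 0, let c_v ∈ ℝ^m and G_v ∈ ℝ^{m×ξ}, and suppose x ∈ ℝ^n satisfies ‖x‖₂ ≤ M and y = C·x + v for some v in the zonotope Z(c_v, G_v). Then x belongs to the zonotope Z(D·(y − c_v), [D·G_v M·V₂]), where [D·G_v M·V₂] ∈ ℝ^{n×(ξ+s)} is the horizontal concatenation of the matrices D·G_v and M·V₂. -/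
open Matrix Set

/-- The zonotope with center `c` and generator matrix `G`:
`Z(c,G) = {c + Gβ : β, ‖β‖_∞ ≤ 1}` (the norm on `ι → ℝ` is the sup norm). -/
def zonotope {n : ℕ} {ι : Type*} [Fintype ι]
    (c : Fin n → ℝ) (G : Matrix (Fin n) ι ℝ) : Set (Fin n → ℝ) :=
  {x | ∃ β : ι → ℝ, ‖β‖ ≤ 1 ∧ x = c + G.mulVec β}

/-!
The hypothesis `1 - D C = V₂ V₂ᵀ` splits the state as `x = D C x + V₂ (V₂ᵀ x)`. Substituting
`C x = y - c_v - G_v β_v` turns the first summand into the center `D (y - c_v)` plus a point of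
`Z(0, D G_v)`. Since the columns of `V₂` are unit vectors, Cauchy–Schwarz bounds every coordinate
of `V₂ᵀ x` by `‖x‖₂ ≤ M`, so the second summand lies in `Z(0, M V₂)`.
-/

theorem abs_dotProduct_le_sqrt_mul_sqrt {ι : Type*} [Fintype ι] (u x : ι → ℝ) :
    |u ⬝ᵥ x| ≤ √(∑ i, u i ^ 2) * √(∑ i, x i ^ 2) := by
  rw [← Real.sqrt_mul (Finset.sum_nonneg fun i _ => sq_nonneg (u i)), ← Real.sqrt_sq_eq_abs]
  exact Real.sqrt_le_sqrt (Finset.sum_mul_sq_le_sq_mul_sq Finset.univ u x)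

theorem norm_transpose_mulVec_le_of_transpose_mul_self_eq_one {ι κ : Type*}
    [Fintype ι] [Fintype κ] [DecidableEq κ] {V : Matrix ι κ ℝ} (hV : Vᵀ * V = 1) (x : ι → ℝ) :
    ‖Vᵀ *ᵥ x‖ ≤ √(∑ i, x i ^ 2) := by
  refine (pi_norm_le_iff_of_nonneg (Real.sqrt_nonneg _)).2 fun k => ?_
  have hcol : ∑ i, V i k ^ 2 = 1 := by
    simpa [Matrix.mul_apply, sq] using congrFun (congrFun hV k) k
  simpa [hcol, Matrix.mulVec, Function.comp_def] using
    abs_dotProduct_le_sqrt_mul_sqrt (fun i => V i k) x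

theorem exists_norm_le_one_eq_smul {E : Type*} [NormedAddCommGroup E] [NormedSpace ℝ E]
    {w : E} {M : ℝ} (hw : ‖w‖ ≤ M) : ∃ β : E, ‖β‖ ≤ 1 ∧ w = M • β := by
  rcases (norm_nonneg w |>.trans hw).eq_or_lt with rfl | hM
  · exact ⟨0, by simp, by simpa using hw⟩
  · refine ⟨M⁻¹ • w, ?_, by rw [smul_inv_smul₀ hM.ne']⟩
    rw [norm_smul, Real.norm_of_nonneg (inv_nonneg.2 hM.le)]
    exact inv_mul_le_one_of_le₀ hw hM.le

theorem add_add_mulVec_mem_zonotope_fromCols {n : ℕ} {ι κ : Type*} [Fintype ι] [Fintype κ]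
    (c : Fin n → ℝ) (G₁ : Matrix (Fin n) ι ℝ) (G₂ : Matrix (Fin n) κ ℝ) {β₁ : ι → ℝ}
    {β₂ : κ → ℝ} (hβ₁ : ‖β₁‖ ≤ 1) (hβ₂ : ‖β₂‖ ≤ 1) :
    c + G₁ *ᵥ β₁ + G₂ *ᵥ β₂ ∈ zonotope c (fromCols G₁ G₂) := by
  refine ⟨Sum.elim β₁ β₂, (pi_norm_le_iff_of_nonneg zero_le_one).2 ?_, ?_⟩
  · rintro (i | k)
    exacts [(norm_le_pi_norm β₁ i).trans hβ₁, (norm_le_pi_norm β₂ k).trans hβ₂]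
  · rw [fromCols_mulVec_sumElim, add_assoc]

theorem mem_consistent_zonotope_general {m n s ξ : ℕ}
    (C : Matrix (Fin m) (Fin n) ℝ) (D : Matrix (Fin n) (Fin m) ℝ)
    (V₂ : Matrix (Fin n) (Fin s) ℝ)
    (hV : V₂ᵀ * V₂ = 1)
    (hDC : (1 : Matrix (Fin n) (Fin n) ℝ) - D * C = V₂ * V₂ᵀ)
    (M : ℝ)
    (c_v : Fin m → ℝ) (G_v : Matrix (Fin m) (Fin ξ) ℝ)
    (x : Fin n → ℝ) (hx : Real.sqrt (∑ i, x i ^ 2) ≤ M)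
    (v : Fin m → ℝ) (hv : v ∈ zonotope c_v G_v)
    (y : Fin m → ℝ) (hy : y = C.mulVec x + v) :
    x ∈ zonotope (D.mulVec (y - c_v)) (Matrix.fromCols (D * G_v) (M • V₂)) := by
  obtain ⟨βv, hβv, rfl⟩ := hv
  obtain ⟨β, hβ, hVx⟩ := exists_norm_le_one_eq_smul
    ((norm_transpose_mulVec_le_of_transpose_mul_self_eq_one hV x).trans hx)
  have hsplit : x = D *ᵥ (C *ᵥ x) + V₂ *ᵥ (V₂ᵀ *ᵥ x) := by
    rw [mulVec_mulVec, mulVec_mulVec, ← hDC, sub_mulVec, one_mulVec, add_sub_cancel]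
  convert add_add_mulVec_mem_zonotope_fromCols (D *ᵥ (y - c_v)) (D * G_v) (M • V₂)
    (β₁ := -βv) (norm_neg βv ▸ hβv) hβ using 1
  have hyc : y - c_v = C *ᵥ x + G_v *ᵥ βv := by rw [hy]; abel
  rw [hyc, mulVec_add, ← mulVec_mulVec, smul_mulVec, ← mulVec_smul, ← hVx, mulVec_neg,
    mulVec_neg, add_neg_cancel_right]
  exact hsplit

/-- State-space region consistent with a measurement: if `‖x‖₂ ≤ M`, `y = C x + v` with
`v ∈ Z(c_v, G_v)`, `V₂ᵀ V₂ = I`, and `Iₙ − D C = V₂ V₂ᵀ`, then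
`x ∈ Z(D(y − c_v), [D G_v  M V₂])`. -/
theorem mem_consistent_zonotope {m n s ξ : ℕ}
    (C : Matrix (Fin m) (Fin n) ℝ) (D : Matrix (Fin n) (Fin m) ℝ)
    (V₂ : Matrix (Fin n) (Fin s) ℝ)
    (hV : V₂ᵀ * V₂ = 1)
    (hDC : (1 : Matrix (Fin n) (Fin n) ℝ) - D * C = V₂ * V₂ᵀ)
    (M : ℝ) (hM : 0 < M)
    (c_v : Fin m → ℝ) (G_v : Matrix (Fin m) (Fin ξ) ℝ)
    (x : Fin n → ℝ) (hx : Real.sqrt (∑ i, x i ^ 2) ≤ M)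
    (v : Fin m → ℝ) (hv : v ∈ zonotope c_v G_v)
    (y : Fin m → ℝ) (hy : y = C.mulVec x + v) :
    x ∈ zonotope (D.mulVec (y - c_v)) (Matrix.fromCols (D * G_v) (M • V₂)) :=
  mem_consistent_zonotope_general C D V₂ hV hDC M c_v G_v x hx v hv y hy
end

section
/- Consider the discrete-time system x(k+1) = A·x(k) + B·u(k) + w(k) with A ∈ ℝ^{n×n}, B ∈ ℝ^{n×m}, known inputs u(k) ∈ ℝ^m, and process noise w(k) ∈ W ⊆ ℝ^n for all k. Let p, q be natural numbers with q < p, suppose x(0) ∈ X₀ ⊆ ℝ^n, and suppose for every k ≥ 1 there are sets Y_k^1, …, Y_k^p ⊆ ℝ^n together with a set S_k ⊆ {1,…,p} of cardinality |S_k| ≥ p − q such that x(k) ∈ Y_k^i for every i ∈ S_k (at most q sensors, possibly different ones at each time, are attacked). Define recursively X̂₀ = X₀ and, for k ≥ 1, X̂_k = (A·X̂_{k−1} ⊕ {B·u(k−1)} ⊕ W) ∩ (⋃_{J ⊆ {1,…,p}, |J| = p−q} ⋂_{i∈J} Y_k^i). Then x(k) ∈ X̂_k for every k ≥ 0. -/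
open Matrix Set Pointwise

theorem mem_biUnion_card_eq_biInter_of_le_card {ι α : Type*} {Y : ι → Set α} {S : Finset ι}
    {r : ℕ} {a : α} (hS : r ≤ S.card) (hY : ∀ i ∈ S, a ∈ Y i) :
    a ∈ ⋃ J ∈ {J : Finset ι | J.card = r}, ⋂ i ∈ J, Y i := by
  obtain ⟨J, hJS, hJcard⟩ := Finset.exists_subset_card_eq hS
  exact mem_biUnion (show J ∈ {J : Finset ι | J.card = r} from hJcard) <|
    mem_biInter fun i hi => hY i (hJS hi)

theorem mulVec_add_add_mem_image_add_add {R n m : Type*} [NonUnitalNonAssocSemiring R]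
    [Fintype n] [Fintype m] {A : Matrix n n R} {B : Matrix n m R} {X W : Set (n → R)}
    {x w : n → R} (u : m → R)
    (hx : x ∈ X) (hw : w ∈ W) :
    A.mulVec x + B.mulVec u + w ∈ (A.mulVec '' X) + {B.mulVec u} + W :=
  add_mem_add (add_mem_add (mem_image_of_mem _ hx) rfl) hw

theorem mem_measurement_update_resilient_general {n m p q : ℕ}
    (A : Matrix (Fin n) (Fin n) ℝ) (B : Matrix (Fin n) (Fin m) ℝ)
    (W X₀ : Set (Fin n → ℝ)) (u : ℕ → Fin m → ℝ) (w : ℕ → Fin n → ℝ)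
    (x : ℕ → Fin n → ℝ)
    (hdyn : ∀ k, x (k + 1) = A.mulVec (x k) + B.mulVec (u k) + w k)
    (hw : ∀ k, w k ∈ W) (hx0 : x 0 ∈ X₀)
    (Y : ℕ → Fin p → Set (Fin n → ℝ))
    (S : ℕ → Finset (Fin p))
    (hS : ∀ k ≥ 1, p - q ≤ (S k).card)
    (hY : ∀ k ≥ 1, ∀ i ∈ S k, x k ∈ Y k i)
    (Xhat : ℕ → Set (Fin n → ℝ))
    (hXhat0 : Xhat 0 = X₀)
    (hXhat : ∀ k, Xhat (k + 1) =
      ((A.mulVec '' Xhat k) + {B.mulVec (u k)} + W) ∩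
        ⋃ J ∈ {J : Finset (Fin p) | J.card = p - q}, ⋂ i ∈ J, Y (k + 1) i) :
    ∀ k, x k ∈ Xhat k := by
  intro k
  induction k with
  | zero => exact hXhat0 ▸ hx0
  | succ k ih =>
    rw [hXhat k]
    exact ⟨hdyn k ▸ mulVec_add_add_mem_image_add_add (u k) ih (hw k),
      mem_biUnion_card_eq_biInter_of_le_card (hS (k + 1) le_add_self) (hY (k + 1) le_add_self)⟩

/-- Resilient measurement update: under time-varying attacks compromising at most `q < p`
sensors at each time (so the true state lies in `Y_k^i` for all `i` in some set `S_k`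
with `|S_k| ≥ p − q`), the true state lies in every measurement update `X̂_k` defined by
`X̂₀ = X₀` and
`X̂_k = (A·X̂_{k−1} ⊕ {B u(k−1)} ⊕ W) ∩ ⋃_{|J| = p−q} ⋂_{i ∈ J} Y_k^i`. -/
theorem mem_measurement_update_resilient {n m p q : ℕ} (hq : q < p)
    (A : Matrix (Fin n) (Fin n) ℝ) (B : Matrix (Fin n) (Fin m) ℝ)
    (W X₀ : Set (Fin n → ℝ)) (u : ℕ → Fin m → ℝ) (w : ℕ → Fin n → ℝ)
    (x : ℕ → Fin n → ℝ)
    (hdyn : ∀ k, x (k + 1) = A.mulVec (x k) + B.mulVec (u k) + w k)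
    (hw : ∀ k, w k ∈ W) (hx0 : x 0 ∈ X₀)
    (Y : ℕ → Fin p → Set (Fin n → ℝ))
    (S : ℕ → Finset (Fin p))
    (hS : ∀ k ≥ 1, p - q ≤ (S k).card)
    (hY : ∀ k ≥ 1, ∀ i ∈ S k, x k ∈ Y k i)
    (Xhat : ℕ → Set (Fin n → ℝ))
    (hXhat0 : Xhat 0 = X₀)
    (hXhat : ∀ k, Xhat (k + 1) =
      ((A.mulVec '' Xhat k) + {B.mulVec (u k)} + W) ∩
        ⋃ J ∈ {J : Finset (Fin p) | J.card = p - q}, ⋂ i ∈ J, Y (k + 1) i) :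
    ∀ k, x k ∈ Xhat k :=
  mem_measurement_update_resilient_general A B W X₀ u w x hdyn hw hx0 Y S hS hY Xhat hXhat0 hXhat
end
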